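/- arXiv:1012.5718 — 5 statements merged into one kernel-verified Lean document; each statement's English description precedes it below -/
import Mathlib

section
/- Let d ≥ 1 and let Θ : M_d(ℂ) → M_d(ℂ) be a ℂ-linear map such that for every d×d density matrix ρ, the characteristic polynomial of Θ(ρ) equals that of ρ. Suppose moreover that Θ is unital, i.e. Θ(1) = 1 where 1 is the d×d identity matrix. Then for every Hermitian matrix A ∈ M_d(ℂ), the characteristic polynomial of Θ(A) equals the characteristic polynomial of A. -/
open Matrix ComplexOrder

/-!
Shifting a Hermitian matrix `A` by a large enough real multiple of the identity makes it
positive definite, and dividing by the trace turns it into a density matrix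
`ρ = s • (A + c • 1)`. By linearity and unitality `Θ ρ = s • (Θ A + c • 1)`, and the
characteristic polynomial of `s • (M + c • 1)` determines that of `M` when `s ≠ 0`.
-/

namespace Matrix

section Charpoly

variable {n R : Type*} [Fintype n] [DecidableEq n] [CommRing R]

lemma eval_charpoly_smul_add_smul_one (M : Matrix n n R) (s u z : R) :
    (s • (M + u • 1)).charpoly.eval (s * (z + u)) = s ^ Fintype.card n * M.charpoly.eval z := by
  rw [eval_charpoly, eval_charpoly, ← det_smul]
  congr 1
  simp only [scalar_apply, ← smul_one_eq_diagonal]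
  module

lemma charpoly_eq_of_charpoly_smul_add_smul_one_eq [IsDomain R] [Infinite R] {s u : R}
    (hs : s ≠ 0) {M N : Matrix n n R}
    (h : (s • (M + u • 1)).charpoly = (s • (N + u • 1)).charpoly) :
    M.charpoly = N.charpoly :=
  Polynomial.funext fun z => mul_left_cancel₀ (pow_ne_zero _ hs) <| by
    rw [← eval_charpoly_smul_add_smul_one, ← eval_charpoly_smul_add_smul_one, h]

end Charpoly

section Hermitian

variable {n 𝕜 : Type*} [Fintype n] [RCLike 𝕜] {A : Matrix n n 𝕜}

lemma IsHermitian.posSemidef_add_smul_one [DecidableEq n] (hA : A.IsHermitian) {c : ℝ}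
    (hc : ∀ i, -c ≤ hA.eigenvalues i) : (A + (c : 𝕜) • 1).PosSemidef := by
  rw [← Algebra.algebraMap_eq_smul_one, posSemidef_iff_isHermitian_and_spectrum_nonneg,
    ← spectrum.add_singleton_eq, hA.spectrum_eq_image_range]
  refine ⟨hA.add (IsSelfAdjoint.algebraMap _ (RCLike.conj_ofReal c)), ?_⟩
  rintro _ ⟨_, ⟨_, ⟨i, rfl⟩, rfl⟩, _, rfl, rfl⟩
  change 0 ≤ ((hA.eigenvalues i : ℝ) : 𝕜) + (c : 𝕜)
  exact_mod_cast (by linarith [hc i] : 0 ≤ hA.eigenvalues i + c)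

lemma IsHermitian.exists_posDef_add_smul_one [DecidableEq n] (hA : A.IsHermitian) :
    ∃ c : ℝ, (A + (c : 𝕜) • 1).PosDef := by
  obtain ⟨b, hb⟩ := Finite.bddBelow_range hA.eigenvalues
  have hpsd := hA.posSemidef_add_smul_one (c := -b) fun i => by simpa using hb ⟨i, rfl⟩
  refine ⟨1 - b, ?_⟩
  convert PosDef.posSemidef_add hpsd PosDef.one using 1
  push_cast
  module

lemma PosDef.posSemidef_inv_trace_smul [Nonempty n] (hA : A.PosDef) :
    (A.trace⁻¹ • A).PosSemidef :=
  hA.posSemidef.smul (inv_pos.mpr hA.trace_pos).le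

lemma PosDef.trace_inv_trace_smul [Nonempty n] (hA : A.PosDef) :
    (A.trace⁻¹ • A).trace = 1 := by
  rw [trace_smul, smul_eq_mul, inv_mul_cancel₀ hA.trace_pos.ne']

end Hermitian

end Matrix

/-- **Lemma L0 of the paper.** A unital ℂ-linear map on `M_d(ℂ)` preserving the
characteristic polynomial of every density matrix preserves the characteristic
polynomial of every Hermitian matrix. -/
theorem stmt_4 (d : ℕ) (hd : 1 ≤ d)
    (Θ : Matrix (Fin d) (Fin d) ℂ →ₗ[ℂ] Matrix (Fin d) (Fin d) ℂ)
    (hΘ : ∀ ρ : Matrix (Fin d) (Fin d) ℂ, ρ.PosSemidef → ρ.trace = 1 →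
      (Θ ρ).charpoly = ρ.charpoly)
    (hunital : Θ 1 = 1) :
    ∀ A : Matrix (Fin d) (Fin d) ℂ, A.IsHermitian →
      (Θ A).charpoly = A.charpoly := by
  intro A hA
  have : Nonempty (Fin d) := ⟨⟨0, hd⟩⟩
  obtain ⟨c, hB⟩ := hA.exists_posDef_add_smul_one
  have hρ := hΘ _ hB.posSemidef_inv_trace_smul hB.trace_inv_trace_smul
  rw [map_smul, map_add, map_smul, hunital] at hρ
  exact charpoly_eq_of_charpoly_smul_add_smul_one_eq (inv_ne_zero hB.trace_pos.ne') hρ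
end

section
/- Let d ≥ 1 and let Θ : M_d(ℂ) → M_d(ℂ) be a ℂ-linear map such that for every d×d density matrix ρ, the characteristic polynomial of Θ(ρ) equals that of ρ. Then Θ(1) = 1, where 1 is the d×d identity matrix. -/
/-!
Since `Θ` preserves characteristic polynomials on density matrices, it preserves `tr ρ` and
`tr ρ²` there (over any commutative ring the characteristic polynomial of `M²` is determined
by that of `M`, because `det (X² - M²) = det (X - M) · det (X + M)`). Density matrices span
`M_d(ℂ)` and are closed under midpoints, so polarization and linearity give `tr Θ(A) = tr A` and
`tr (Θ(A) Θ(B)) = tr (A B)` for all `A, B`. The trace form is nondegenerate, so `Θ` is injective,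
hence surjective, and `tr (Θ(B) Θ(1)) = tr B = tr (Θ(B))` for every `B` forces `Θ(1) = 1`.
-/

open Matrix ComplexOrder Polynomial
open scoped MatrixOrder Matrix.Norms.L2Operator

namespace Matrix

section CommRing

variable {n R : Type*} [Fintype n] [DecidableEq n] [CommRing R]

theorem charpoly_mul_charpoly_comp_neg_X (M : Matrix n n R) :
    M.charpoly * M.charpoly.comp (-X) = (-1) ^ Fintype.card n * expand R 2 (M * M).charpoly := by
  have hneg : M.charpoly.comp (-X) = (-1) ^ Fintype.card n * det (scalar n X + M.map C) := by
    rw [← coe_compRingHom_apply, charpoly, RingHom.map_det, ← det_neg]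
    congr 1
    ext i j
    by_cases h : i = j <;> simp [h, sub_eq_add_neg, add_comm]
  have hexpand : expand R 2 (M * M).charpoly = det (charmatrix M * (scalar n X + M.map C)) := by
    have hmap : (charmatrix (M * M)).map (expand R 2) = scalar n (X * X) - (M * M).map C := by
      ext i j
      by_cases h : i = j <;> simp [h, sq, -Matrix.map_mul]
    rw [charpoly, ← AlgHom.coe_toRingHom, RingHom.map_det, RingHom.mapMatrix_apply,
      AlgHom.coe_toRingHom, hmap, charmatrix, RingHom.mapMatrix_apply, sub_mul, mul_add, mul_add,
      (scalar_commute X (Commute.all X) (M.map C)).eq, map_mul, Matrix.map_mul (f := C)]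
    abel_nf
  rw [hneg, hexpand, det_mul, charpoly]
  ring

theorem charpoly_mul_self_eq_of_charpoly_eq {M N : Matrix n n R} (h : M.charpoly = N.charpoly) :
    (M * M).charpoly = (N * N).charpoly := by
  have hMN := charpoly_mul_charpoly_comp_neg_X M
  rw [h, charpoly_mul_charpoly_comp_neg_X N] at hMN
  exact expand_injective two_pos ((isUnit_neg_one.pow _).mul_left_cancel hMN.symm)

theorem trace_eq_of_charpoly_eq {M N : Matrix n n R} (h : M.charpoly = N.charpoly) :
    M.trace = N.trace := by
  cases isEmpty_or_nonempty n
  · simp [trace]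
  · rw [trace_eq_neg_charpoly_coeff, h, trace_eq_neg_charpoly_coeff]

end CommRing

theorem span_posSemidef_trace_eq_one {n : Type*} [Fintype n] [DecidableEq n] :
    Submodule.span ℂ {ρ : Matrix n n ℂ | ρ.PosSemidef ∧ ρ.trace = 1} = ⊤ := by
  refine eq_top_iff.2 (CStarAlgebra.span_nonneg.ge.trans (Submodule.span_le.2 fun A hA => ?_))
  have hA : A.PosSemidef := nonneg_iff_posSemidef.1 hA
  by_cases htr : A.trace = 0
  · simp [hA.trace_eq_zero_iff.1 htr]
  · have hρ : A.trace⁻¹ • A ∈ {ρ : Matrix n n ℂ | ρ.PosSemidef ∧ ρ.trace = 1} :=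
      ⟨hA.smul (inv_nonneg_of_nonneg hA.trace_nonneg),
        by rw [trace_smul, smul_eq_mul, inv_mul_cancel₀ htr]⟩
    simpa [smul_smul, mul_inv_cancel₀ htr] using
      Submodule.smul_mem _ A.trace (Submodule.subset_span hρ)

end Matrix

namespace LinearMap

variable {n K : Type*} [Fintype n] [Field K]

theorem trace_mul_map_eq_of_mem [NeZero (2 : K)] {Θ : Matrix n n K →ₗ[K] Matrix n n K}
    {S : Set (Matrix n n K)} (hmid : ∀ ρ ∈ S, ∀ σ ∈ S, (2⁻¹ : K) • (ρ + σ) ∈ S)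
    (hsq : ∀ ρ ∈ S, (Θ ρ * Θ ρ).trace = (ρ * ρ).trace) {ρ σ : Matrix n n K} (hρ : ρ ∈ S)
    (hσ : σ ∈ S) : (Θ ρ * Θ σ).trace = (ρ * σ).trace := by
  have hμ := hsq _ (hmid ρ hρ σ hσ)
  simp only [map_smul, map_add, Matrix.smul_mul, Matrix.mul_smul, add_mul, mul_add, trace_smul,
    trace_add, smul_eq_mul, Matrix.trace_mul_comm (Θ σ), Matrix.trace_mul_comm σ] at hμ
  field_simp at hμ
  refine mul_left_cancel₀ (two_ne_zero' K) ?_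
  linear_combination hμ - hsq ρ hρ - hsq σ hσ

theorem trace_mul_map_eq_of_span [NeZero (2 : K)] {Θ : Matrix n n K →ₗ[K] Matrix n n K}
    {S : Set (Matrix n n K)} (hS : Submodule.span K S = ⊤)
    (hmid : ∀ ρ ∈ S, ∀ σ ∈ S, (2⁻¹ : K) • (ρ + σ) ∈ S)
    (hsq : ∀ ρ ∈ S, (Θ ρ * Θ ρ).trace = (ρ * ρ).trace) (A B : Matrix n n K) :
    (Θ A * Θ B).trace = (A * B).trace := by
  let τ : Matrix n n K →ₗ[K] Matrix n n K →ₗ[K] K :=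
    (mul K _).compr₂ (Matrix.traceLinearMap n K K)
  have hτ : τ.compl₁₂ Θ Θ = τ :=
    ext_on hS fun ρ hρ => ext_on hS fun σ hσ => trace_mul_map_eq_of_mem hmid hsq hρ hσ
  exact congr_fun₂ hτ A B

theorem map_one_eq_one_of_trace_mul [DecidableEq n] {Θ : Matrix n n K →ₗ[K] Matrix n n K}
    (htrace : ∀ A, (Θ A).trace = A.trace) (hmul : ∀ A B, (Θ A * Θ B).trace = (A * B).trace) :
    Θ 1 = 1 := by
  have hinj : Function.Injective Θ := by
    refine (injective_iff_map_eq_zero Θ).2 fun A hA => ?_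
    refine Matrix.ext_iff_trace_mul_left.2 fun B => ?_
    rw [← hmul, hA, Matrix.mul_zero, Matrix.mul_zero]
  refine Matrix.ext_iff_trace_mul_left.2 fun C => ?_
  obtain ⟨B, rfl⟩ := surjective_of_injective hinj C
  rw [hmul, Matrix.mul_one, Matrix.mul_one, htrace]

end LinearMap

theorem stmt_5_general (d : ℕ)
    (Θ : Matrix (Fin d) (Fin d) ℂ →ₗ[ℂ] Matrix (Fin d) (Fin d) ℂ)
    (hΘ : ∀ ρ : Matrix (Fin d) (Fin d) ℂ, ρ.PosSemidef → ρ.trace = 1 →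
      (Θ ρ).charpoly = ρ.charpoly) :
    Θ 1 = 1 := by
  set S := {ρ : Matrix (Fin d) (Fin d) ℂ | ρ.PosSemidef ∧ ρ.trace = 1}
  have hS : Submodule.span ℂ S = ⊤ := span_posSemidef_trace_eq_one
  have hmid : ∀ ρ ∈ S, ∀ σ ∈ S, (2⁻¹ : ℂ) • (ρ + σ) ∈ S := fun ρ hρ σ hσ =>
    ⟨(hρ.1.add hσ.1).smul (by positivity), by
      rw [trace_smul, trace_add, hρ.2, hσ.2]; norm_num⟩
  have htrace : (traceLinearMap _ ℂ ℂ).comp Θ = traceLinearMap _ ℂ ℂ :=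
    LinearMap.ext_on hS fun ρ hρ => trace_eq_of_charpoly_eq (hΘ ρ hρ.1 hρ.2)
  have hsq : ∀ ρ ∈ S, (Θ ρ * Θ ρ).trace = (ρ * ρ).trace := fun ρ hρ =>
    trace_eq_of_charpoly_eq (charpoly_mul_self_eq_of_charpoly_eq (hΘ ρ hρ.1 hρ.2))
  exact LinearMap.map_one_eq_one_of_trace_mul (LinearMap.congr_fun htrace)
    (LinearMap.trace_mul_map_eq_of_span hS hmid hsq)

/-- **Lemma L1 of the paper.** Any ℂ-linear map on `M_d(ℂ)` preserving the
characteristic polynomial of every density matrix is unital: `Θ(1) = 1`. -/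
theorem stmt_5 (d : ℕ) (hd : 1 ≤ d)
    (Θ : Matrix (Fin d) (Fin d) ℂ →ₗ[ℂ] Matrix (Fin d) (Fin d) ℂ)
    (hΘ : ∀ ρ : Matrix (Fin d) (Fin d) ℂ, ρ.PosSemidef → ρ.trace = 1 →
      (Θ ρ).charpoly = ρ.charpoly) :
    Θ 1 = 1 :=
  stmt_5_general d Θ hΘ
end

section
/- Let d ≥ 1 and let Λ : M_d(ℂ) → M_d(ℂ) be a ℂ-linear map. Then Λ preserves the determinant and the trace of every matrix A ∈ M_d(ℂ) (i.e. det(Λ(A)) = det(A) and tr(Λ(A)) = tr(A) for all A) if and only if Λ preserves the characteristic polynomial of every matrix A ∈ M_d(ℂ) (i.e. charpoly(Λ(A)) = charpoly(A) for all A). Moreover, if these equivalent conditions hold, there exists an invertible matrix S ∈ M_d(ℂ) such that either Λ(A) = S⁻¹ A S for all A ∈ M_d(ℂ), or Λ(A) = S⁻¹ Aᵀ S for all A ∈ M_d(ℂ). -/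
/-!
Writing `tr (A ^ k)` as the `k`-th power sum of the roots of the characteristic polynomial
(triangularise one eigenvector at a time), a map `Λ` preserving characteristic polynomials
preserves `tr (A ^ 2)` and `tr (A ^ 3)`; polarising gives `tr (Λ A * Λ B) = tr (A * B)` and
`tr (Λ A * Λ A * Λ B) = tr (A * A * B)`. The first identity makes `Λ` injective, hence bijective,
and then the second one says that `Λ` is a Jordan map: `Λ (A * A) = Λ A * Λ A`.
By Herstein's argument a Jordan map onto a prime ring without `2`-torsion is multiplicative or
antimultiplicative, and a multiplicative automorphism of `M_n(K)` is inner (Skolem–Noether).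

If `Λ` only preserves determinants and traces, put `J = Λ 1`, so `det J = 1`. Since `Λ (x • 1) = x • J`,
`det (x • 1 - J⁻¹ * Λ A) = det (Λ (x • 1 - A)) = det (x • 1 - A)`, so `A ↦ J⁻¹ * Λ A` preserves
characteristic polynomials, hence traces; comparing with `tr (Λ A) = tr A` forces `J = 1`.
-/

open Matrix Polynomial

namespace Matrix

variable {n : Type*} [Fintype n] [DecidableEq n]

omit [DecidableEq n] in
theorem trace_reindex {R m : Type*} [AddCommMonoid R] [Fintype m] (e : n ≃ m) (A : Matrix n n R) :
    (reindex e e A).trace = A.trace :=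
  Fintype.sum_equiv e.symm _ _ fun _ => rfl

theorem det_one_updateCol {R : Type*} [CommRing R] (p : n) (v : n → R) :
    ((1 : Matrix n n R).updateCol p v).det = v p := by
  simpa [one_apply] using det_updateCol_sum (1 : Matrix n n R) p v

section Blocks

variable {R : Type*} [CommRing R] {l m : Type*} [Fintype l] [Fintype m]

theorem trace_fromBlocks (A : Matrix l l R) (B : Matrix l m R) (C : Matrix m l R)
    (D : Matrix m m R) : (fromBlocks A B C D).trace = A.trace + D.trace := by
  simp [trace, Fintype.sum_sum_type]

variable [DecidableEq l] [DecidableEq m]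

theorem exists_fromBlocks_zero₂₁_pow (A : Matrix l l R) (B : Matrix l m R) (D : Matrix m m R)
    (k : ℕ) : ∃ B' : Matrix l m R, fromBlocks A B 0 D ^ k = fromBlocks (A ^ k) B' 0 (D ^ k) := by
  induction k with
  | zero => exact ⟨0, by simp [fromBlocks_one]⟩
  | succ k ih =>
    obtain ⟨B', hB'⟩ := ih
    exact ⟨A ^ k * B + B' * D, by simp [pow_succ, hB', fromBlocks_multiply]⟩

end Blocks

section ColumnZero

variable {R : Type*} [CommRing R] {B : Matrix n n R} {p : n}

omit [Fintype n] in
theorem reindex_sumCompl_eq_fromBlocks (hB : ∀ i ≠ p, B i p = 0) :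
    reindex (Equiv.sumCompl (· = p)).symm (Equiv.sumCompl (· = p)).symm B =
      fromBlocks (diagonal fun _ => B p p) (B.submatrix (fun _ => p) (↑)) 0
        (B.submatrix (↑) (↑) : Matrix {i // i ≠ p} {i // i ≠ p} R) := by
  ext (⟨i, hi⟩ | ⟨i, hi⟩) (⟨j, hj⟩ | ⟨j, hj⟩) <;> subst_vars <;> simp [*]

theorem charpoly_eq_mul_of_col_eq_zero (hB : ∀ i ≠ p, B i p = 0) :
    B.charpoly = (X - C (B p p)) *
      (B.submatrix (↑) (↑) : Matrix {i // i ≠ p} {i // i ≠ p} R).charpoly := by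
  rw [← charpoly_reindex (Equiv.sumCompl (· = p)).symm, reindex_sumCompl_eq_fromBlocks hB,
    charpoly_fromBlocks_zero₂₁, charpoly_diagonal]
  simp

theorem trace_pow_eq_add_of_col_eq_zero (hB : ∀ i ≠ p, B i p = 0) (k : ℕ) :
    (B ^ k).trace = B p p ^ k +
      ((B.submatrix (↑) (↑) : Matrix {i // i ≠ p} {i // i ≠ p} R) ^ k).trace := by
  obtain ⟨B', hB'⟩ := exists_fromBlocks_zero₂₁_pow (diagonal fun _ : {i // i = p} => B p p)
    (B.submatrix (fun _ => p) (↑)) (B.submatrix (↑) (↑) : Matrix {i // i ≠ p} {i // i ≠ p} R) k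
  rw [← trace_reindex (Equiv.sumCompl (· = p)).symm, ← coe_reindexAlgEquiv R R, map_pow,
    coe_reindexAlgEquiv, reindex_sumCompl_eq_fromBlocks hB, hB', trace_fromBlocks,
    diagonal_pow, trace_diagonal]
  simp

end ColumnZero

theorem exists_units_conj_col_eq_zero {K : Type*} [Field K] [IsAlgClosed K] [Nonempty n]
    (M : Matrix n n K) :
    ∃ (P : (Matrix n n K)ˣ) (p : n), ∀ i ≠ p, (P⁻¹.val * M * P.val) i p = 0 := by
  obtain ⟨μ, hμ⟩ := Module.End.exists_eigenvalue (toLin' M)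
  obtain ⟨v, hv⟩ := hμ.exists_hasEigenvector
  obtain ⟨p, hp⟩ := Function.ne_iff.mp hv.2
  set P := (1 : Matrix n n K).updateCol p v
  have hP : IsUnit P.det := by simpa [P, det_one_updateCol] using hp
  have hPe : P *ᵥ Pi.single p 1 = v := by ext i; simp [P]
  refine ⟨nonsingInvUnit P hP, p, fun i hi => ?_⟩
  have hMv : M *ᵥ v = μ • v := hv.apply_eq_smul
  have : (P⁻¹ * M * P) *ᵥ Pi.single p 1 = μ • Pi.single p 1 := by
    rw [← mulVec_mulVec, hPe, ← mulVec_mulVec, hMv, mulVec_smul, ← hPe, mulVec_mulVec,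
      nonsing_inv_mul P hP, one_mulVec]
  simpa [mulVec_single_one, hi, nonsingInvUnit, ← coe_units_inv] using congrFun this i

theorem trace_pow_eq_sum_roots_charpoly_pow {K : Type*} [Field K] [IsAlgClosed K]
    (M : Matrix n n K) (k : ℕ) : (M ^ k).trace = (M.charpoly.roots.map (· ^ k)).sum := by
  induction h : Fintype.card n generalizing n with
  | zero =>
    have := Fintype.card_eq_zero_iff.mp h
    simp [trace]
  | succ m ih =>
    have : Nonempty n := Fintype.card_pos_iff.mp (by omega)
    obtain ⟨P, p, hB⟩ := exists_units_conj_col_eq_zero M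
    have hcard : Fintype.card {i // i ≠ p} = m := by simp [Fintype.card_subtype_compl, h]
    rw [← charpoly_units_conj' P, ← coe_units_inv, charpoly_eq_mul_of_col_eq_zero hB,
      ← trace_units_conj' P, ← Units.conj_pow', trace_pow_eq_add_of_col_eq_zero hB, ih _ hcard,
      roots_mul ((monic_X_sub_C _).mul (charpoly_monic _)).ne_zero, roots_X_sub_C]
    simp

theorem trace_add_sq {R : Type*} [CommRing R] (X Y : Matrix n n R) :
    ((X + Y) ^ 2).trace = (X ^ 2).trace + 2 * (X * Y).trace + (Y ^ 2).trace := by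
  rw [show (X + Y) ^ 2 = X ^ 2 + (X * Y + Y * X) + Y ^ 2 by noncomm_ring]
  simp only [trace_add, trace_mul_comm Y X]
  ring

theorem trace_add_pow_three_sub_sub_pow_three {R : Type*} [CommRing R] (X Y : Matrix n n R) :
    ((X + Y) ^ 3).trace - ((X - Y) ^ 3).trace = 6 * (X * X * Y).trace + 2 * (Y ^ 3).trace := by
  rw [← trace_sub, show (X + Y) ^ 3 - (X - Y) ^ 3 =
    2 • (X * X * Y + X * Y * X + Y * X * X) + 2 • Y ^ 3 by noncomm_ring]
  simp only [trace_add, trace_smul]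
  rw [trace_mul_cycle X Y X, trace_mul_cycle Y X X, trace_mul_cycle X Y X]
  ring

end Matrix

def IsPrimeRing (S : Type*) [Mul S] [Zero S] : Prop :=
  ∀ u v : S, (∀ x, u * x * v = 0) → u = 0 ∨ v = 0

theorem Matrix.isPrimeRing {n R : Type*} [Fintype n] [DecidableEq n] [Ring R] [NoZeroDivisors R] :
    IsPrimeRing (Matrix n n R) := by
  intro u v h
  by_contra! huv
  obtain ⟨p, q, hu⟩ : ∃ p q, u p q ≠ 0 := by simpa [← Matrix.ext_iff] using huv.1
  obtain ⟨r, s, hv⟩ : ∃ r s, v r s ≠ 0 := by simpa [← Matrix.ext_iff] using huv.2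
  have : (u * single q r (1 : R) * v : Matrix n n R) p s = u p q * v r s := by
    rw [Matrix.mul_assoc, mul_apply, Finset.sum_eq_single q] <;> simp +contextual
  exact mul_ne_zero hu hv (this ▸ congr_fun₂ (h (single q r 1)) p s)

instance Matrix.instIsAddTorsionFree {m n α : Type*} [AddMonoid α] [IsAddTorsionFree α] :
    IsAddTorsionFree (Matrix m n α) :=
  inferInstanceAs (IsAddTorsionFree (m → n → α))

theorem eq_of_add_self_eq {S : Type*} [AddCommGroup S] [IsAddTorsionFree S] {x y : S}
    (h : x + x = y + y) : x = y :=
  nsmul_right_injective two_ne_zero (by simpa [two_nsmul] using h)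

theorem LinearMap.eq_zero_or_eq_zero_of_forall_or {K M N P : Type*} [Ring K] [AddCommGroup M]
    [Module K M] [AddCommGroup N] [Module K N] [AddCommGroup P] [Module K P] {g : M →ₗ[K] N}
    {h : M →ₗ[K] P} (hgh : ∀ x, g x = 0 ∨ h x = 0) : g = 0 ∨ h = 0 := by
  have := (AddSubgroupClass.subset_union (H := (⊤ : AddSubgroup M))
    (K := (LinearMap.ker g).toAddSubgroup) (L := (LinearMap.ker h).toAddSubgroup)).mp
    fun x _ => hgh x
  simpa [eq_top_iff, SetLike.le_def, LinearMap.ext_iff] using this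

theorem IsPrimeRing.eq_zero_or_eq_zero_of_mul_mul_add {S : Type*} [Ring S] [IsAddTorsionFree S]
    (hS : IsPrimeRing S) {u v : S} (h : ∀ x, u * x * v + v * x * u = 0) : u = 0 ∨ v = 0 := by
  have hvu : ∀ x y, v * x * v * y * u = 0 := by
    intro x y
    refine eq_of_add_self_eq ?_
    linear_combination (norm := noncomm_ring) v * x * h y - h x * y * v + h (x * v * y)
  by_cases hu : u = 0
  · exact Or.inl hu
  · refine Or.inr ((hS v v fun x => ?_).elim id id)
    exact (hS _ _ (hvu x)).resolve_right hu

section Jordan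

variable {K R S : Type*} [CommRing K] [Ring R] [Ring S] [Algebra K R] [Algebra K S]
  {f : R →ₗ[K] S} (hf : ∀ a, f (a * a) = f a * f a)
include hf

theorem map_mul_add_map_mul_of_map_mul_self (a b : R) :
    f (a * b) + f (b * a) = f a * f b + f b * f a := by
  have h := hf (a + b)
  simp only [add_mul, mul_add, map_add, hf a, hf b] at h
  linear_combination (norm := noncomm_ring) h

theorem map_mul_mul_of_map_mul_self [IsAddTorsionFree S] (a b : R) :
    f (a * b * a) = f a * f b * f a := by
  have h₁ := map_mul_add_map_mul_of_map_mul_self hf a (a * b + b * a)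
  have h₂ := map_mul_add_map_mul_of_map_mul_self hf (a * a) b
  have h₃ := map_mul_add_map_mul_of_map_mul_self hf a b
  rw [hf] at h₂
  simp only [mul_add, add_mul, map_add, ← mul_assoc] at h₁
  refine eq_of_add_self_eq ?_
  linear_combination (norm := noncomm_ring) h₁ - h₂ + f a * h₃ + h₃ * f a

theorem map_mul_mul_add_map_mul_mul_of_map_mul_self [IsAddTorsionFree S] (a b c : R) :
    f (a * c * b) + f (b * c * a) = f a * f c * f b + f b * f c * f a := by
  have h := map_mul_mul_of_map_mul_self hf (a + b) c
  simp only [add_mul, mul_add, map_add, map_mul_mul_of_map_mul_self hf] at h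
  linear_combination (norm := noncomm_ring) h

theorem map_mul_sub_mul_mul_add_of_map_mul_self [IsAddTorsionFree S] (a b x : R) :
    (f (a * b) - f a * f b) * f x * (f (a * b) - f b * f a) +
      (f (a * b) - f b * f a) * f x * (f (a * b) - f a * f b) = 0 := by
  have h₁ := map_mul_mul_add_map_mul_mul_of_map_mul_self hf (a * b) (b * a) x
  have h₂ := map_mul_add_map_mul_of_map_mul_self hf a b
  have h₃ : f (a * b * x * (b * a)) + f (b * a * x * (a * b)) =
      f a * f b * f x * f b * f a + f b * f a * f x * f a * f b := by
    have e₁ := map_mul_mul_of_map_mul_self hf a (b * x * b)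
    have e₂ := map_mul_mul_of_map_mul_self hf b (a * x * a)
    simp only [map_mul_mul_of_map_mul_self hf, ← mul_assoc] at e₁ e₂
    simp only [← mul_assoc]
    rw [e₁, e₂]
  linear_combination (norm := noncomm_ring)
    f (a * b) * f x * h₂ + h₂ * f x * f (a * b) + h₁ - h₃

theorem map_mul_or_map_mul_flip_of_map_mul_self [IsAddTorsionFree S] (hS : IsPrimeRing S)
    (hsurj : Function.Surjective f) :
    (∀ a b, f (a * b) = f a * f b) ∨ (∀ a b, f (a * b) = f b * f a) := by
  let g := (LinearMap.mul K R).compr₂ f - (LinearMap.mul K S).compl₁₂ f f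
  let h := (LinearMap.mul K R).compr₂ f - (LinearMap.mul K S).flip.compl₁₂ f f
  have hgh : ∀ a b, g a b = 0 ∨ h a b = 0 := fun a b =>
    hS.eq_zero_or_eq_zero_of_mul_mul_add fun x => by
      obtain ⟨x, rfl⟩ := hsurj x
      simpa [g, h] using map_mul_sub_mul_mul_add_of_map_mul_self hf a b x
  rcases LinearMap.eq_zero_or_eq_zero_of_forall_or fun a =>
    LinearMap.eq_zero_or_eq_zero_of_forall_or (hgh a) with hg | hh
  · exact Or.inl fun a b => sub_eq_zero.mp (by simpa [g] using LinearMap.congr_fun₂ hg a b)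
  · exact Or.inr fun a b => sub_eq_zero.mp (by simpa [h] using LinearMap.congr_fun₂ hh a b)

end Jordan

namespace Matrix

theorem exists_eq_conj_of_map_mul {K n : Type*} [Field K] [Fintype n] [DecidableEq n]
    (Λ : Matrix n n K →ₗ[K] Matrix n n K) (hinj : Function.Injective Λ)
    (hmul : ∀ A B, Λ (A * B) = Λ A * Λ B) :
    ∃ S : Matrix n n K, IsUnit S ∧ ∀ A, Λ A = S⁻¹ * A * S := by
  have hsurj := LinearMap.injective_iff_surjective.mp hinj
  have hone : Λ 1 = 1 := by
    obtain ⟨B, hB⟩ := hsurj 1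
    calc Λ 1 = Λ 1 * Λ B := by rw [hB, mul_one]
      _ = 1 := by rw [← hmul, one_mul, hB]
  let φ : Matrix n n K ≃ₐ[K] Matrix n n K :=
    AlgEquiv.ofLinearEquiv (LinearEquiv.ofBijective Λ ⟨hinj, hsurj⟩) hone hmul
  obtain ⟨T, hT⟩ := ((toLinAlgEquiv'.symm.trans φ).trans toLinAlgEquiv').eq_linearEquivConjAlgEquiv
  set M := LinearMap.toMatrixAlgEquiv' (R := K) (n := n)
  have hTT : M T.toLinearMap * M T.symm.toLinearMap = 1 := by
    rw [← map_mul, ← map_one M]; congr 1; ext; simp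
  refine ⟨M T.symm.toLinearMap,
    (isUnit_iff_isUnit_det _).mpr (isUnit_det_of_left_inverse hTT), fun A => ?_⟩
  rw [inv_eq_left_inv hTT]
  have := congr(M ($hT (toLinAlgEquiv' A)))
  simp only [M, LinearEquiv.conjAlgEquiv_apply, LinearMap.toMatrixAlgEquiv'_comp,
    AlgEquiv.trans_apply, AlgEquiv.symm_apply_apply,
    LinearMap.toMatrixAlgEquiv'_toLinAlgEquiv'] at this
  rwa [← Matrix.mul_assoc] at this

section Preservers

variable {K n : Type*} [Field K] [Fintype n] [DecidableEq n] {Λ : Matrix n n K →ₗ[K] Matrix n n K}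

theorem trace_map_mul_map_of_trace_map_sq [CharZero K]
    (h : ∀ A, ((Λ A) ^ 2).trace = (A ^ 2).trace) (A B : Matrix n n K) :
    (Λ A * Λ B).trace = (A * B).trace := by
  have hAB := h (A + B)
  rw [map_add, trace_add_sq, trace_add_sq, h, h] at hAB
  linear_combination hAB / 2

theorem trace_map_mul_map_mul_map_of_trace_map_pow_three [CharZero K]
    (h : ∀ A, ((Λ A) ^ 3).trace = (A ^ 3).trace) (A B : Matrix n n K) :
    (Λ A * Λ A * Λ B).trace = (A * A * B).trace := by
  have hΛ := trace_add_pow_three_sub_sub_pow_three (Λ A) (Λ B)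
  rw [← map_add, ← map_sub, h, h, h] at hΛ
  linear_combination (trace_add_pow_three_sub_sub_pow_three A B - hΛ) / 6

omit [DecidableEq n] in
theorem injective_of_trace_map_mul_map (h : ∀ A B, (Λ A * Λ B).trace = (A * B).trace) :
    Function.Injective Λ := by
  intro A A' hA
  rw [ext_iff_trace_mul_right]
  intro x
  rw [← h A, ← h A', hA]

omit [DecidableEq n] in
theorem map_mul_self_of_trace_map_mul (h₂ : ∀ A B, (Λ A * Λ B).trace = (A * B).trace)
    (h₃ : ∀ A B, (Λ A * Λ A * Λ B).trace = (A * A * B).trace) (A : Matrix n n K) :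
    Λ (A * A) = Λ A * Λ A := by
  rw [ext_iff_trace_mul_right]
  intro x
  obtain ⟨B, rfl⟩ := LinearMap.injective_iff_surjective.mp (injective_of_trace_map_mul_map h₂) x
  rw [h₂, h₃]

theorem trace_map_pow_of_charpoly_map [IsAlgClosed K] (h : ∀ A, (Λ A).charpoly = A.charpoly)
    (A : Matrix n n K) (k : ℕ) : ((Λ A) ^ k).trace = (A ^ k).trace := by
  rw [trace_pow_eq_sum_roots_charpoly_pow, h, trace_pow_eq_sum_roots_charpoly_pow]

theorem injective_of_charpoly_map [IsAlgClosed K] [CharZero K]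
    (h : ∀ A, (Λ A).charpoly = A.charpoly) : Function.Injective Λ :=
  injective_of_trace_map_mul_map
    (trace_map_mul_map_of_trace_map_sq (trace_map_pow_of_charpoly_map h · 2))

theorem exists_eq_conj_or_eq_conj_transpose_of_charpoly_map [IsAlgClosed K] [CharZero K]
    (h : ∀ A, (Λ A).charpoly = A.charpoly) :
    ∃ S : Matrix n n K, IsUnit S ∧
      ((∀ A, Λ A = S⁻¹ * A * S) ∨ (∀ A, Λ A = S⁻¹ * Aᵀ * S)) := by
  have h₂ := trace_map_mul_map_of_trace_map_sq (trace_map_pow_of_charpoly_map h · 2)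
  have h₃ := trace_map_mul_map_mul_map_of_trace_map_pow_three (trace_map_pow_of_charpoly_map h · 3)
  have hinj := injective_of_charpoly_map h
  rcases map_mul_or_map_mul_flip_of_map_mul_self (map_mul_self_of_trace_map_mul h₂ h₃)
    Matrix.isPrimeRing (LinearMap.injective_iff_surjective.mp hinj) with hmul | hanti
  · obtain ⟨S, hS, hΛ⟩ := exists_eq_conj_of_map_mul Λ hinj hmul
    exact ⟨S, hS, Or.inl hΛ⟩
  · obtain ⟨S, hS, hΛ⟩ := exists_eq_conj_of_map_mul
      (Λ ∘ₗ (transposeLinearEquiv n n K K).toLinearMap) (hinj.comp transpose_injective)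
      fun A B => by simp [hanti]
    exact ⟨S, hS, Or.inr fun A => by simpa using hΛ Aᵀ⟩

theorem charpoly_map_of_det_map_of_trace_map [IsAlgClosed K] [CharZero K]
    (h : ∀ A, (Λ A).det = A.det ∧ (Λ A).trace = A.trace) (A : Matrix n n K) :
    (Λ A).charpoly = A.charpoly := by
  set J := Λ 1
  have hJ : J.det = 1 := by rw [(h 1).1, det_one]
  have hJu : IsUnit J.det := by simp [hJ]
  set Λ' := LinearMap.mulLeft K J⁻¹ ∘ₗ Λ
  have hΛ' : ∀ A, (Λ' A).charpoly = A.charpoly := by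
    intro A
    refine Polynomial.funext fun x => ?_
    have : scalar n x - Λ' A = J⁻¹ * Λ (scalar n x - A) := by
      rw [map_sub, Matrix.mul_sub, scalar_apply, ← smul_one_eq_diagonal, map_smul,
        mul_smul_comm, nonsing_inv_mul J hJu]
      rfl
    rw [eval_charpoly, eval_charpoly, this, det_mul, (h _).1, det_nonsing_inv, hJ,
      Ring.inverse_one, one_mul]
  have hsurj : Function.Surjective Λ :=
    LinearMap.injective_iff_surjective.mp
      (Function.Injective.of_comp (f := LinearMap.mulLeft K J⁻¹) (injective_of_charpoly_map hΛ'))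
  have hJ₁ : J⁻¹ = 1 := by
    rw [ext_iff_trace_mul_right]
    intro x
    obtain ⟨B, rfl⟩ := hsurj x
    rw [one_mul, (h B).2, ← LinearMap.mulLeft_apply K, ← LinearMap.comp_apply,
      trace_eq_neg_charpoly_nextCoeff, hΛ', ← trace_eq_neg_charpoly_nextCoeff]
  simpa [Λ', hJ₁] using hΛ' A

end Preservers

end Matrix

theorem stmt_10_general (d : ℕ)
    (Λ : Matrix (Fin d) (Fin d) ℂ →ₗ[ℂ] Matrix (Fin d) (Fin d) ℂ) :
    ((∀ A : Matrix (Fin d) (Fin d) ℂ,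
        (Λ A).det = A.det ∧ (Λ A).trace = A.trace) ↔
      (∀ A : Matrix (Fin d) (Fin d) ℂ, (Λ A).charpoly = A.charpoly)) ∧
    ((∀ A : Matrix (Fin d) (Fin d) ℂ, (Λ A).charpoly = A.charpoly) →
      (∃ S : Matrix (Fin d) (Fin d) ℂ, IsUnit S ∧
        ((∀ A : Matrix (Fin d) (Fin d) ℂ, Λ A = S⁻¹ * A * S) ∨
         (∀ A : Matrix (Fin d) (Fin d) ℂ, Λ A = S⁻¹ * Aᵀ * S)))) := by
  refine ⟨⟨charpoly_map_of_det_map_of_trace_map, fun h A => ⟨?_, ?_⟩⟩,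
    exists_eq_conj_or_eq_conj_transpose_of_charpoly_map⟩
  · rw [det_eq_sign_charpoly_coeff, h, ← det_eq_sign_charpoly_coeff]
  · rw [trace_eq_neg_charpoly_nextCoeff, h, ← trace_eq_neg_charpoly_nextCoeff]

/-- **Theorem 2 of the paper (Marcus–Moyls + Minc).** A ℂ-linear map `Λ` on
`M_d(ℂ)` preserves determinant and trace of every matrix iff it preserves the
characteristic polynomial of every matrix; moreover, in that case there is an
invertible `S` with either `Λ(A) = S⁻¹ A S` for all `A` or `Λ(A) = S⁻¹ Aᵀ S`
for all `A`. -/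
theorem stmt_10 (d : ℕ) (hd : 1 ≤ d)
    (Λ : Matrix (Fin d) (Fin d) ℂ →ₗ[ℂ] Matrix (Fin d) (Fin d) ℂ) :
    ((∀ A : Matrix (Fin d) (Fin d) ℂ,
        (Λ A).det = A.det ∧ (Λ A).trace = A.trace) ↔
      (∀ A : Matrix (Fin d) (Fin d) ℂ, (Λ A).charpoly = A.charpoly)) ∧
    ((∀ A : Matrix (Fin d) (Fin d) ℂ, (Λ A).charpoly = A.charpoly) →
      (∃ S : Matrix (Fin d) (Fin d) ℂ, IsUnit S ∧
        ((∀ A : Matrix (Fin d) (Fin d) ℂ, Λ A = S⁻¹ * A * S) ∨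
         (∀ A : Matrix (Fin d) (Fin d) ℂ, Λ A = S⁻¹ * Aᵀ * S)))) :=
  stmt_10_general d Λ
end

section
/- Let d ≥ 1 and let Λ : M_d(ℂ) → M_d(ℂ) be a ℂ-linear map. Then the characteristic polynomial of Λ(ρ) equals that of ρ for every d×d density matrix ρ if and only if the characteristic polynomial of Λ(A) equals that of A for every matrix A ∈ M_d(ℂ). -/
/-!
The characteristic polynomials of `A + t • B`, `t ∈ R`, are the specialisations of one
characteristic polynomial over `R[X]`; hence if those of `Λ (A + t • B)` and `A + t • B` agree
for infinitely many `t`, they agree on the whole line. Density matrices contain a real segment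
starting at the maximally mixed state in the direction of any Hermitian trace-one matrix, which
gives all Hermitian trace-one matrices; then all trace-one matrices via `M = ℜ M + I • ℑ M`,
nonzero-trace matrices by homogeneity of the characteristic polynomial, and finally every `A`
through the line `A + t • 1`.
-/

open Matrix ComplexOrder

namespace Matrix

open Polynomial

variable {R : Type*} [CommRing R] {n : Type*}

noncomputable def pencil (A B : Matrix n n R) : Matrix n n R[X] :=
  A.map C + (X : R[X]) • B.map C

theorem pencil_map_eval (A B : Matrix n n R) (t : R) :
    (pencil A B).map (evalRingHom t) = A + t • B := by
  ext i j
  simp only [pencil, map_apply, add_apply, smul_apply, coe_evalRingHom, eval_add, eval_C,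
    smul_eq_mul, eval_mul, eval_X]

variable [Fintype n] [DecidableEq n]

theorem charpoly_pencil_map_eval (A B : Matrix n n R) (t : R) :
    (pencil A B).charpoly.map (evalRingHom t) = (A + t • B).charpoly := by
  rw [← charpoly_map, pencil_map_eval]

theorem charpoly_add_smul_eq_of_infinite [IsDomain R] {A B A' B' : Matrix n n R} {S : Set R}
    (hS : S.Infinite) (h : ∀ t ∈ S, (A' + t • B').charpoly = (A + t • B).charpoly) (t : R) :
    (A' + t • B').charpoly = (A + t • B).charpoly := by
  have hpencil : (pencil A' B').charpoly = (pencil A B).charpoly := by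
    ext1 k
    refine eq_of_infinite_eval_eq _ _ (hS.mono fun s hs => ?_)
    have := congrArg (coeff · k) (h s hs)
    simpa only [← charpoly_pencil_map_eval, coeff_map, coe_evalRingHom, Set.mem_ofPred_eq]
      using this
  rw [← charpoly_pencil_map_eval, hpencil, charpoly_pencil_map_eval]

theorem charpoly_smul_eq_of_charpoly_eq {K : Type*} [Field K] [Infinite K] {M N : Matrix n n K}
    (h : M.charpoly = N.charpoly) (c : K) : (c • M).charpoly = (c • N).charpoly := by
  rcases eq_or_ne c 0 with rfl | hc
  · simp only [zero_smul]
  have heval (A : Matrix n n K) (x : K) :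
      (c • A).charpoly.eval x = c ^ Fintype.card n * A.charpoly.eval (x / c) := by
    rw [eval_charpoly, eval_charpoly, ← det_smul, smul_sub, scalar_apply, scalar_apply,
      ← diagonal_smul]
    congr 3
    exact funext fun _ => (mul_div_cancel₀ _ hc).symm
  exact funext fun x => by rw [heval, heval, h]

end Matrix

theorem LinearMap.charpoly_apply_add_smul_eq_of_infinite {R : Type*} [CommRing R] [IsDomain R]
    {n : Type*} [Fintype n] [DecidableEq n] (Λ : Matrix n n R →ₗ[R] Matrix n n R)
    {A B : Matrix n n R} {S : Set R} (hS : S.Infinite)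
    (h : ∀ t ∈ S, (Λ (A + t • B)).charpoly = (A + t • B).charpoly) (t : R) :
    (Λ (A + t • B)).charpoly = (A + t • B).charpoly := by
  simp only [map_add, map_smul] at h ⊢
  exact charpoly_add_smul_eq_of_infinite hS h t

section DensityMatrix

open scoped Matrix.Norms.L2Operator MatrixOrder ComplexStarModule

theorem Matrix.IsHermitian.posSemidef_smul_one_add {n : Type*} [Fintype n] [DecidableEq n]
    {C : Matrix n n ℂ} (hC : C.IsHermitian) {a : ℝ} (ha : ‖C‖ ≤ a) :
    ((a : ℂ) • (1 : Matrix n n ℂ) + C).PosSemidef := by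
  have hnorm : (C + (‖C‖ : ℂ) • 1).PosSemidef := by
    have := hC.isSelfAdjoint.neg_algebraMap_norm_le_self
    rwa [neg_le_iff_add_nonneg, nonneg_iff_posSemidef, Algebra.algebraMap_eq_smul_one,
      ← Complex.coe_smul] at this
  have hgap : (((a - ‖C‖ : ℝ) : ℂ) • (1 : Matrix n n ℂ)).PosSemidef :=
    PosSemidef.one.smul (by exact_mod_cast sub_nonneg.mpr ha)
  convert hnorm.add hgap using 1
  push_cast
  module

variable {n : Type*} [Fintype n] [DecidableEq n]

def PreservesDensityCharpoly (Λ : Matrix n n ℂ →ₗ[ℂ] Matrix n n ℂ) : Prop :=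
  ∀ ρ : Matrix n n ℂ, ρ.PosSemidef → ρ.trace = 1 → (Λ ρ).charpoly = ρ.charpoly

variable [Nonempty n] {Λ : Matrix n n ℂ →ₗ[ℂ] Matrix n n ℂ}

theorem PreservesDensityCharpoly.charpoly_eq_of_isHermitian (hΛ : PreservesDensityCharpoly Λ)
    {M : Matrix n n ℂ} (hM : M.IsHermitian) (htr : M.trace = 1) :
    (Λ M).charpoly = M.charpoly := by
  set a : ℝ := (Fintype.card n : ℝ)⁻¹
  set ρ₀ : Matrix n n ℂ := (a : ℂ) • 1
  have hρ₀ : ρ₀.IsHermitian := (PosSemidef.one.smul (by positivity)).isHermitian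
  have hρ₀tr : ρ₀.trace = 1 := by simp [ρ₀, a]
  set C := M - ρ₀
  have hC : C.IsHermitian := hM.sub hρ₀
  have hCtr : C.trace = 0 := by rw [trace_sub, htr, hρ₀tr, sub_self]
  set ε : ℝ := ((Fintype.card n : ℝ) * (‖C‖ + 1))⁻¹
  have hdensity (t : ℝ) (ht : t ∈ Set.Icc 0 ε) :
      (ρ₀ + (t : ℂ) • C).PosSemidef ∧ (ρ₀ + (t : ℂ) • C).trace = 1 := by
    refine ⟨(hC.smul (Complex.conj_ofReal t)).posSemidef_smul_one_add ?_,
      by simp [trace_add, hρ₀tr, hCtr]⟩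
    obtain ⟨ht0, htε⟩ := ht
    calc ‖(t : ℂ) • C‖ = t * ‖C‖ := by rw [norm_smul, Complex.norm_of_nonneg ht0]
      _ ≤ ε * (‖C‖ + 1) := by gcongr; linarith
      _ = a := by simp only [ε, a]; field_simp
  have hS : ((↑) '' Set.Icc 0 ε : Set ℂ).Infinite :=
    (Set.Icc_infinite (by positivity)).image Complex.ofReal_injective.injOn
  have := Λ.charpoly_apply_add_smul_eq_of_infinite hS
    (by rintro _ ⟨t, ht, rfl⟩; exact hΛ _ (hdensity t ht).1 (hdensity t ht).2) 1
  simpa [C] using this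

theorem PreservesDensityCharpoly.charpoly_eq_of_trace_eq_one (hΛ : PreservesDensityCharpoly Λ)
    {M : Matrix n n ℂ} (htr : M.trace = 1) : (Λ M).charpoly = M.charpoly := by
  have hre : (ℜ M : Matrix n n ℂ).trace = 1 := by
    simp [realPart_apply_coe, star_eq_conjTranspose, trace_add, htr]
    norm_num
  have him : (ℑ M : Matrix n n ℂ).trace = 0 := by
    simp [imaginaryPart_apply_coe, star_eq_conjTranspose, trace_sub, htr]
  have hS : (Set.range ((↑) : ℝ → ℂ)).Infinite :=
    Set.infinite_range_of_injective Complex.ofReal_injective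
  have := Λ.charpoly_apply_add_smul_eq_of_infinite hS (A := ℜ M) (B := ℑ M) ?_ Complex.I
  · rwa [realPart_add_I_smul_imaginaryPart] at this
  rintro _ ⟨t, rfl⟩
  refine hΛ.charpoly_eq_of_isHermitian ?_ (by simp [trace_add, hre, him])
  simpa [Complex.coe_smul] using (ℜ M + t • ℑ M).prop.isHermitian

theorem PreservesDensityCharpoly.charpoly_eq_of_trace_ne_zero (hΛ : PreservesDensityCharpoly Λ)
    {M : Matrix n n ℂ} (htr : M.trace ≠ 0) : (Λ M).charpoly = M.charpoly := by
  have hscaled := hΛ.charpoly_eq_of_trace_eq_one (M := M.trace⁻¹ • M)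
    (by rw [trace_smul, smul_eq_mul, inv_mul_cancel₀ htr])
  have := charpoly_smul_eq_of_charpoly_eq hscaled M.trace
  rwa [← map_smul, smul_inv_smul₀ htr] at this

theorem PreservesDensityCharpoly.charpoly_eq (hΛ : PreservesDensityCharpoly Λ)
    (A : Matrix n n ℂ) : (Λ A).charpoly = A.charpoly := by
  have hcard : (Fintype.card n : ℂ) ≠ 0 := by simp
  have hS : {t : ℂ | (A + t • 1).trace = 0}ᶜ.Infinite := by
    refine Set.Finite.infinite_compl
      ((Set.finite_singleton (-A.trace / Fintype.card n)).subset fun t ht => ?_)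
    simp only [Set.mem_ofPred_eq, trace_add, trace_smul, trace_one, smul_eq_mul] at ht
    rw [Set.mem_singleton_iff]
    field_simp
    linear_combination ht
  simpa using Λ.charpoly_apply_add_smul_eq_of_infinite hS
    (fun t ht => hΛ.charpoly_eq_of_trace_ne_zero ht) 0

end DensityMatrix

/-- **Final Remark of Section 4 of the paper.** A ℂ-linear map on `M_d(ℂ)`
preserves the characteristic polynomial of every density matrix iff it
preserves the characteristic polynomial of every matrix. -/
theorem stmt_11 (d : ℕ) (hd : 1 ≤ d)
    (Λ : Matrix (Fin d) (Fin d) ℂ →ₗ[ℂ] Matrix (Fin d) (Fin d) ℂ) :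
    (∀ ρ : Matrix (Fin d) (Fin d) ℂ, ρ.PosSemidef → ρ.trace = 1 →
      (Λ ρ).charpoly = ρ.charpoly) ↔
    (∀ A : Matrix (Fin d) (Fin d) ℂ, (Λ A).charpoly = A.charpoly) := by
  have : Nonempty (Fin d) := ⟨⟨0, hd⟩⟩
  exact ⟨PreservesDensityCharpoly.charpoly_eq, fun h ρ _ _ => h ρ⟩
end

section
/- Let d_A, d_B ≥ 1, let u : Fin d_A → (Fin d_A → ℂ) and v : Fin d_B → (Fin d_B → ℂ) be orthonormal bases of ℂ^{d_A} and ℂ^{d_B} respectively, let e : Fin d_A → Fin d_B → ℝ be nonnegative reals with Σ_{m,n} e m n = 1, and let ρ be the density matrix indexed by (Fin d_A × Fin d_B) given by ρ((i,k),(j,l)) = Σ_{m,n} (e m n) · (u m i) · conj(u m j) · (v n k) · conj(v n l) (i.e. ρ = Σ_{m,n} e_{mn} |u_m⟩⟨u_m| ⊗ |v_n⟩⟨v_n| has a product eigenbasis). Then the partial transpose (I⊗T)(ρ), defined by ((I⊗T)M)((i,k),(j,l)) = M((i,l),(j,k)), has the same characteristic polynomial as ρ. -/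
/-!
Write `ρ = (U ⊗ V) D (U ⊗ V)ᴴ`, where `U`, `V` are the unitaries whose columns are the `u_m`,
`v_n` and `D` is the diagonal of the `e_{mn}`. Transposing the second factor
replaces `v_n` by its complex conjugate, which is again an orthonormal basis, so
`(I ⊗ T) ρ = (U ⊗ V̄) D (U ⊗ V̄)ᴴ`: both matrices are unitarily similar to `D`.
-/

open Matrix

/-- Partial transposition `I ⊗ T`:
`((I⊗T)M)((i,k),(j,l)) = M((i,l),(j,k))`. -/
def partialTranspose (dA dB : ℕ)
    (M : Matrix (Fin dA × Fin dB) (Fin dA × Fin dB) ℂ) :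
    Matrix (Fin dA × Fin dB) (Fin dA × Fin dB) ℂ :=
  Matrix.of fun p q => M (p.1, q.2) (q.1, p.2)

open scoped Kronecker

theorem Matrix.charpoly_unitary_conj {n : Type*} [Fintype n] [DecidableEq n]
    {W : Matrix n n ℂ} (hW : W ∈ unitaryGroup n ℂ) (D : Matrix n n ℂ) :
    (W * D * star W).charpoly = D.charpoly := by
  rw [mul_assoc, charpoly_mul_comm, mul_assoc, mem_unitaryGroup_iff'.mp hW, mul_one]

theorem Matrix.kronecker_mul_diagonal_mul_star_apply {ι κ : Type*}
    [Fintype ι] [Fintype κ] [DecidableEq ι] [DecidableEq κ]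
    (W : Matrix ι ι ℂ) (V : Matrix κ κ ℂ) (d : ι → κ → ℂ) (i j : ι) (k l : κ) :
    ((W ⊗ₖ V) * diagonal (fun p : ι × κ => d p.1 p.2) * star (W ⊗ₖ V)) (i, k) (j, l) =
      ∑ m, ∑ n, d m n * W i m * star (W j m) * V k n * star (V l n) := by
  rw [mul_apply]
  simp only [mul_diagonal, star_apply, kroneckerMap_apply, Fintype.sum_prod_type, star_mul']
  refine Finset.sum_congr rfl fun m _ => Finset.sum_congr rfl fun n _ => ?_
  ring

theorem partialTranspose_kronecker_mul_diagonal_mul_star {dA dB : ℕ}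
    (W : Matrix (Fin dA) (Fin dA) ℂ) (V : Matrix (Fin dB) (Fin dB) ℂ)
    (d : Fin dA → Fin dB → ℂ) :
    partialTranspose dA dB
        ((W ⊗ₖ V) * diagonal (fun p : Fin dA × Fin dB => d p.1 p.2) * star (W ⊗ₖ V)) =
      (W ⊗ₖ V.map star) * diagonal (fun p => d p.1 p.2) * star (W ⊗ₖ V.map star) := by
  ext ⟨i, k⟩ ⟨j, l⟩
  simp only [partialTranspose, of_apply, kronecker_mul_diagonal_mul_star_apply, map_apply,
    star_star]
  refine Finset.sum_congr rfl fun m _ => Finset.sum_congr rfl fun n _ => ?_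
  ring

theorem mem_unitaryGroup_of_orthonormal {n : Type*} [Fintype n] [DecidableEq n]
    {u : n → n → ℂ} (hu : ∀ m m', (∑ i, star (u m i) * u m' i) = if m = m' then 1 else 0) :
    (Matrix.of fun i m => u m i) ∈ unitaryGroup n ℂ := by
  rw [mem_unitaryGroup_iff']
  ext m m'
  simpa [mul_apply, one_apply] using hu m m'

theorem stmt_13_general (dA dB : ℕ)
    (u : Fin dA → (Fin dA → ℂ)) (v : Fin dB → (Fin dB → ℂ))
    (hu : ∀ m m' : Fin dA,
      (∑ i : Fin dA, star (u m i) * u m' i) = if m = m' then 1 else 0)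
    (hv : ∀ n n' : Fin dB,
      (∑ k : Fin dB, star (v n k) * v n' k) = if n = n' then 1 else 0)
    (e : Fin dA → Fin dB → ℝ)
    (ρ : Matrix (Fin dA × Fin dB) (Fin dA × Fin dB) ℂ)
    (hρ : ρ = Matrix.of fun p q =>
      ∑ m : Fin dA, ∑ n : Fin dB,
        (e m n : ℂ) * u m p.1 * star (u m q.1) * v n p.2 * star (v n q.2)) :
    (partialTranspose dA dB ρ).charpoly = ρ.charpoly := by
  set U : Matrix (Fin dA) (Fin dA) ℂ := Matrix.of fun i m => u m i
  set V : Matrix (Fin dB) (Fin dB) ℂ := Matrix.of fun k n => v n k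
  have hU : U ∈ unitaryGroup (Fin dA) ℂ := mem_unitaryGroup_of_orthonormal hu
  have hV : V ∈ unitaryGroup (Fin dB) ℂ := mem_unitaryGroup_of_orthonormal hv
  have hρ_eigen : ρ = (U ⊗ₖ V) * diagonal (fun p => (e p.1 p.2 : ℂ)) * star (U ⊗ₖ V) := by
    ext ⟨i, k⟩ ⟨j, l⟩
    rw [hρ, kronecker_mul_diagonal_mul_star_apply U V fun m n => (e m n : ℂ)]
    rfl
  rw [hρ_eigen, partialTranspose_kronecker_mul_diagonal_mul_star U V fun m n => (e m n : ℂ),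
    charpoly_unitary_conj (kronecker_mem_unitary hU (map_star_mem_unitaryGroup_iff.mpr hV)),
    charpoly_unitary_conj (kronecker_mem_unitary hU hV)]

/-- **Partial transposition preserves the eigenvalues of any state with a
product eigenbasis.** If `{u_m}` and `{v_n}` are orthonormal bases of `ℂ^{d_A}`
and `ℂ^{d_B}`, `e_{mn} ≥ 0` sum to `1`, and
`ρ = Σ_{mn} e_{mn} |u_m⟩⟨u_m| ⊗ |v_n⟩⟨v_n|`, then the partial transpose of `ρ`
has the same characteristic polynomial as `ρ`. -/
theorem stmt_13 (dA dB : ℕ) (hA : 1 ≤ dA) (hB : 1 ≤ dB)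
    (u : Fin dA → (Fin dA → ℂ)) (v : Fin dB → (Fin dB → ℂ))
    (hu : ∀ m m' : Fin dA,
      (∑ i : Fin dA, star (u m i) * u m' i) = if m = m' then 1 else 0)
    (hv : ∀ n n' : Fin dB,
      (∑ k : Fin dB, star (v n k) * v n' k) = if n = n' then 1 else 0)
    (e : Fin dA → Fin dB → ℝ)
    (he : ∀ m n, 0 ≤ e m n)
    (hsum : (∑ m : Fin dA, ∑ n : Fin dB, e m n) = 1)
    (ρ : Matrix (Fin dA × Fin dB) (Fin dA × Fin dB) ℂ)
    (hρ : ρ = Matrix.of fun p q =>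
      ∑ m : Fin dA, ∑ n : Fin dB,
        (e m n : ℂ) * u m p.1 * star (u m q.1) * v n p.2 * star (v n q.2)) :
    (partialTranspose dA dB ρ).charpoly = ρ.charpoly :=
  stmt_13_general dA dB u v hu hv e ρ hρ
end
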